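/- If T is a locally finite tree with finitely many leaves such that T is isomorphic to T - x for some leaf x, then T is isomorphic to a one-way infinite path (a ray). -/

import Mathlib

open SimpleGraph Set

/-- A leaf of a graph: a vertex with exactly one neighbor (degree 1). -/
def IsLeaf {V : Type*} (G : SimpleGraph V) (x : V) : Prop :=
  (G.neighborSet x).encard = 1

/-- `v` is in the core `c(T)`: deleting `v` leaves at least two infinite components. -/
def InCore {V : Type*} (G : SimpleGraph V) (v : V) : Prop :=
  ∃ C D : (G.induce {u | u ≠ v}).ConnectedComponent,
    C ≠ D ∧ C.supp.Infinite ∧ D.supp.Infinite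

/-- The one-way infinite path (ray) on ℕ. -/
def rayGraph : SimpleGraph ℕ := SimpleGraph.fromRel (fun m n => n = m + 1)

/-!
Let `y` be the neighbour of the leaf `x` and view `e : T ≃ T - x` as a self-embedding `f` of `T`
whose image misses exactly `x`. No path passes through a leaf, so `T - x` sits isometrically in
`T` and `f` is an isometry. A leaf of `T - x` is a leaf of `T` or `y`, so by counting, `f` maps
the finite leaf set `{x} ∪ A` bijectively onto `{y} ∪ A`. The sums of pairwise distances of these
two sets agree, while `d(x, b) = d(y, b) + 1` for `b ∈ A`; hence `A = ∅`. So `x` is the only leaf,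
`f x = y`, and the orbit `x, f x, f² x, …` is a ray closed under adjacency, i.e. all of `T`.
-/

lemma rayGraph_adj {m n : ℕ} : rayGraph.Adj m n ↔ n = m + 1 ∨ m = n + 1 := by
  simp only [rayGraph, SimpleGraph.fromRel_adj]
  omega

lemma Function.Injective.iterate_apply_injective {α : Type*} {f : α → α}
    (hf : Function.Injective f) {a : α} (ha : a ∉ Set.range f) :
    Function.Injective fun n => f^[n] a := by
  have key : ∀ m n, n < m → f^[m] a ≠ f^[n] a := fun m n hnm h => by
    have h' := Function.iterate_cancel hf h
    obtain ⟨k, hk⟩ : ∃ k, m - n = k + 1 := ⟨m - n - 1, by omega⟩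
    rw [hk, Function.iterate_succ_apply'] at h'
    exact ha ⟨_, h'⟩
  intro m n h
  by_contra hmn
  rcases Nat.lt_or_gt_of_ne hmn with hlt | hlt
  exacts [key n m hlt h.symm, key m n hlt h]

lemma Finset.eq_insert_and_notMem_of_subset_insert {α : Type*} [DecidableEq α] {s t : Finset α}
    {y : α} (hst : s ⊆ insert y t) (hcard : s.card = t.card + 1) : s = insert y t ∧ y ∉ t := by
  have heq : s = insert y t :=
    Finset.eq_of_subset_of_card_le hst (hcard ▸ Finset.card_insert_le _ _)
  refine ⟨heq, fun hy => ?_⟩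
  rw [heq, Finset.insert_eq_of_mem hy] at hcard
  omega

namespace SimpleGraph

variable {V W : Type*} {G : SimpleGraph V} {H : SimpleGraph W} {u v x y : V}

lemma Reachable.mem_of_adj_closed {s : Set V} (h : G.Reachable u v) (hu : u ∈ s)
    (hs : ∀ a b, a ∈ s → G.Adj a b → b ∈ s) : v ∈ s := by
  obtain ⟨p⟩ := h
  induction p with
  | nil => exact hu
  | cons hab _ ih => exact ih (hs _ _ hu hab)

lemma Reachable.dist_map_le (f : G →g H) (h : G.Reachable u v) :
    H.dist (f u) (f v) ≤ G.dist u v := by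
  obtain ⟨p, hp⟩ := h.exists_walk_length_eq_dist
  simpa [hp] using dist_le (p.map f)

lemma Iso.dist_eq (e : G ≃g H) (u v : V) : H.dist (e u) (e v) = G.dist u v := by
  by_cases h : G.Reachable u v
  · refine le_antisymm (h.dist_map_le e.toHom) ?_
    simpa using (h.map e.toHom).dist_map_le e.symm.toHom
  · have h' : ¬ H.Reachable (e u) (e v) := fun h' => h (by simpa using h'.map e.symm.toHom)
    rw [dist_eq_zero_of_not_reachable h, dist_eq_zero_of_not_reachable h']

lemma Iso.isLeaf (e : G ≃g H) (hv : IsLeaf G v) : IsLeaf H (e v) := by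
  rwa [IsLeaf, ← Set.encard_congr (e.mapNeighborSet v)]

lemma Walk.IsPath.notMem_support_of_neighborSet_eq_singleton {p : G.Walk u v} (hp : p.IsPath)
    (hx : G.neighborSet x = {y}) (hu : u ≠ x) (hv : v ≠ x) : x ∉ p.support := by
  intro hmem
  -- an interior vertex of a path has two neighbours on it
  obtain ⟨i, rfl, hi⟩ := Walk.mem_support_iff_exists_getVert.mp hmem
  have hi0 : i ≠ 0 := by rintro rfl; simp at hu
  have hil : i < p.length := lt_of_le_of_ne hi (by rintro rfl; simp at hv)
  have h2 := hp.ncard_neighborSet_toSubgraph_internal_eq_two hi0 hil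
  have h1 := Set.ncard_le_ncard (p.toSubgraph.neighborSet_subset _)
    (by rw [hx]; exact finite_singleton y)
  rw [hx, ncard_singleton] at h1
  omega

lemma Connected.dist_induce_ne (hc : G.Connected) (hx : G.neighborSet x = {y})
    (u v : {v | v ≠ x}) : (G.induce {v | v ≠ x}).dist u v = G.dist u v := by
  obtain ⟨p, hp, hlen⟩ := hc.exists_path_of_dist u v
  have hs : ∀ w ∈ p.support, w ∈ {v | v ≠ x} := fun w hw hwx =>
    hp.notMem_support_of_neighborSet_eq_singleton hx u.2 v.2 (hwx ▸ hw)
  have hlen' : (p.induce _ hs).length = p.length := by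
    have h := congrArg Walk.length (p.map_induce hs)
    rwa [Walk.length_map] at h
  refine le_antisymm ?_ (Reachable.dist_map_le (Embedding.induce _).toHom ⟨p.induce _ hs⟩)
  exact hlen ▸ hlen' ▸ dist_le _

lemma Connected.dist_eq_dist_add_one (hc : G.Connected) (hx : G.neighborSet x = {y})
    (hv : v ≠ x) : G.dist x v = G.dist y v + 1 := by
  have hxy : G.Adj x y := by rw [← mem_neighborSet, hx]; rfl
  obtain ⟨p, hp⟩ := hc.exists_walk_length_eq_dist x v
  cases p with
  | nil => exact absurd rfl hv
  | @cons _ a _ hxa q =>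
    have hay : a = y := by rw [← mem_singleton_iff, ← hx]; exact hxa
    subst hay
    have hq := dist_le q
    have htri := hc.dist_triangle (u := x) (v := a) (w := v)
    rw [dist_eq_one_iff_adj.mpr hxy] at htri
    rw [Walk.length_cons] at hp
    omega

lemma isLeaf_of_isLeaf_induce_ne (hx : G.neighborSet x = {y}) {u : {v | v ≠ x}}
    (hu : IsLeaf (G.induce {v | v ≠ x}) u) : IsLeaf G u ∨ (u : V) = y := by
  by_cases hux : G.Adj u x
  · exact Or.inr (by rw [← mem_singleton_iff, ← hx]; exact hux.symm)
  · refine Or.inl ((Set.encard_congr ?_).symm.trans hu)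
    exact { toFun := fun w => ⟨w.1.1, w.2⟩
            invFun := fun w => ⟨⟨w.1, fun h => hux (h ▸ w.2 :)⟩, w.2⟩ }

noncomputable def pairDistSum (G : SimpleGraph V) (s : Finset V) : ℕ :=
  ∑ a ∈ s, ∑ b ∈ s, G.dist a b

lemma pairDistSum_image [DecidableEq W] {f : V → W} (hf : Function.Injective f)
    (hd : ∀ a b, H.dist (f a) (f b) = G.dist a b) (s : Finset V) :
    H.pairDistSum (s.image f) = G.pairDistSum s := by
  simp only [pairDistSum, Finset.sum_image fun a _ b _ h => hf h, hd]

lemma pairDistSum_insert [DecidableEq V] {s : Finset V} (hv : v ∉ s) :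
    G.pairDistSum (insert v s) = 2 * ∑ b ∈ s, G.dist v b + G.pairDistSum s := by
  simp only [pairDistSum, Finset.sum_insert hv, dist_self, Finset.sum_add_distrib]
  rw [Finset.sum_congr rfl fun a _ => G.dist_comm (u := a) (v := v)]
  ring

theorem Connected.setOf_isLeaf_eq_singleton (hc : G.Connected) (hx : G.neighborSet x = {y})
    (hfin : {v | IsLeaf G v}.Finite) (e : G ≃g G.induce {v | v ≠ x}) :
    {v | IsLeaf G v} = {x} := by
  classical
  set f : V → V := fun v => e v
  have hf : Function.Injective f := Subtype.val_injective.comp e.injective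
  have hfd : ∀ a b, G.dist (f a) (f b) = G.dist a b := fun a b =>
    (hc.dist_induce_ne hx _ _).symm.trans (e.dist_eq a b)
  obtain ⟨L, hL⟩ : ∃ L : Finset V, ↑L = {v | IsLeaf G v} := ⟨hfin.toFinset, hfin.coe_toFinset⟩
  have hxL : x ∈ L := by simp [← Finset.mem_coe, hL, IsLeaf, hx]
  obtain ⟨A, hxA, rfl⟩ : ∃ A, x ∉ A ∧ insert x A = L :=
    ⟨L.erase x, Finset.notMem_erase x L, Finset.insert_erase hxL⟩
  have hsub : (insert x A).image f ⊆ insert y A := by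
    intro w hw
    obtain ⟨v, hv, rfl⟩ := Finset.mem_image.mp hw
    have hv : IsLeaf G v := by rw [← Finset.mem_coe, hL] at hv; exact hv
    rcases isLeaf_of_isLeaf_induce_ne hx (e.isLeaf hv) with h | h
    · refine Finset.mem_insert_of_mem ((Finset.mem_insert.mp ?_).resolve_left (e v).2)
      rw [← Finset.mem_coe, hL]
      exact h
    · exact h ▸ Finset.mem_insert_self _ _
  have hcard : ((insert x A).image f).card = A.card + 1 := by
    rw [Finset.card_image_of_injective _ hf, Finset.card_insert_of_notMem hxA]
  obtain ⟨himage, hyA⟩ := Finset.eq_insert_and_notMem_of_subset_insert hsub hcard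
  have hsum := pairDistSum_image hf hfd (insert x A)
  rw [himage, pairDistSum_insert hyA, pairDistSum_insert hxA] at hsum
  have hxy : ∑ b ∈ A, G.dist x b = ∑ b ∈ A, G.dist y b + A.card := by
    rw [Finset.card_eq_sum_ones, ← Finset.sum_add_distrib]
    exact Finset.sum_congr rfl fun b hb =>
      hc.dist_eq_dist_add_one hx (fun h => hxA (h ▸ hb))
  have hA : A = ∅ := Finset.card_eq_zero.mp (by omega)
  rw [← hL, hA]
  simp

theorem Connected.nonempty_iso_rayGraph (hc : G.Connected) (f : G ↪g G)
    (hrange : Set.range f = {x}ᶜ) (hx : G.neighborSet x = {f x}) :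
    Nonempty (G ≃g rayGraph) := by
  set X : ℕ → V := fun n => f^[n] x
  have hX : ∀ n, X (n + 1) = f (X n) := fun n => Function.iterate_succ_apply' f n x
  have hXinj : Function.Injective X := f.injective.iterate_apply_injective (by simp [hrange])
  have hadj_succ : ∀ n, G.Adj (X n) (X (n + 1)) := by
    intro n
    induction n with
    | zero => show f x ∈ G.neighborSet x; rw [hx]; rfl
    | succ n ih => rw [hX, hX (n + 1)]; exact f.map_adj_iff.mpr ih
  have hnbr : ∀ n v, G.Adj (X n) v → ∃ m, X m = v ∧ rayGraph.Adj n m := by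
    intro n
    induction n with
    | zero =>
      intro v (hv : v ∈ G.neighborSet x)
      rw [hx] at hv
      exact ⟨1, hv.symm, by simp [rayGraph_adj]⟩
    | succ n ih =>
      intro v hv
      rw [hX] at hv
      by_cases hvx : v = x
      · subst hvx
        have hfx : f (X n) = f v := by rw [← mem_singleton_iff, ← hx]; exact hv.symm
        have hn : n = 0 := hXinj (f.injective hfx)
        exact ⟨0, rfl, by simp [rayGraph_adj, hn]⟩
      · obtain ⟨w, rfl⟩ : v ∈ Set.range f := hrange ▸ hvx
        obtain ⟨m, rfl, hm⟩ := ih w (f.map_adj_iff.mp hv)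
        exact ⟨m + 1, hX m, by rw [rayGraph_adj] at hm ⊢; omega⟩
  have hXsurj : Function.Surjective X := fun v => by
    refine (hc.preconnected x v).mem_of_adj_closed (s := Set.range X) ⟨0, rfl⟩ ?_
    rintro _ b ⟨n, rfl⟩ hb
    obtain ⟨m, hm, -⟩ := hnbr n b hb
    exact ⟨m, hm⟩
  refine ⟨(RelIso.mk (Equiv.ofBijective X ⟨hXinj, hXsurj⟩) fun {m n} => ?_).symm⟩
  refine ⟨fun h => ?_, fun h => ?_⟩
  · obtain ⟨k, hk, hmk⟩ := hnbr m _ h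
    rwa [← hXinj hk]
  · rcases rayGraph_adj.mp h with rfl | rfl
    exacts [hadj_succ m, (hadj_succ n).symm]

end SimpleGraph

theorem stmt_1_general {V : Type*} (G : SimpleGraph V) (hT : G.IsTree)
    (hfin : {x | IsLeaf G x}.Finite)
    (h : ∃ x, IsLeaf G x ∧ Nonempty (G ≃g G.induce {v | v ≠ x})) :
    Nonempty (G ≃g rayGraph) := by
  obtain ⟨x, hx, ⟨e⟩⟩ := h
  obtain ⟨y, hy⟩ := Set.encard_eq_one.mp hx
  have hc := hT.connected
  have hleaves := hc.setOf_isLeaf_eq_singleton hy hfin e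
  let f : G ↪g G := e.toEmbedding.trans (Embedding.induce _)
  have hrange : Set.range f = {x}ᶜ := by
    ext v
    refine ⟨fun ⟨w, hw⟩ => hw ▸ (e w).2, fun hv => ⟨e.symm ⟨v, hv⟩, by simp [f]⟩⟩
  have hfx : f x = y := by
    rcases isLeaf_of_isLeaf_induce_ne hy (e.isLeaf hx) with h | h
    · exact absurd (hleaves ▸ h : (e x : V) ∈ ({x} : Set V)) (e x).2
    · exact h
  exact hc.nonempty_iso_rayGraph f hrange (hfx ▸ hy)

/-- a locally finite tree with finitely many leaves isomorphic to
T - x for some leaf x is a ray. -/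
theorem stmt_1 {V : Type*} (G : SimpleGraph V) (hT : G.IsTree)
    (hlf : ∀ v, (G.neighborSet v).Finite)
    (hfin : {x | IsLeaf G x}.Finite)
    (h : ∃ x, IsLeaf G x ∧ Nonempty (G ≃g G.induce {v | v ≠ x})) :
    Nonempty (G ≃g rayGraph) :=
  stmt_1_general G hT hfin h
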